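/- SL_3(𝔽_7) contains no element of order 27. -/
import Mathlib


open Matrix Polynomial

instance : Fact (Nat.Prime 7) := ⟨by norm_num⟩

abbrev SL3 := Matrix.SpecialLinearGroup (Fin 3) (ZMod 7)

lemma irr_aux (c : ZMod 7) (hc : ∀ b : ZMod 7, b ^ 3 ≠ c) :
    Irreducible (X ^ 9 - C c) := by
  apply X_pow_sub_C_irreducible_of_odd (by decide)
  intro p hp hpdvd b
  have hp3 : p = 3 := by
    have : p ∣ 3 := hp.dvd_of_dvd_pow (n := 2) (by norm_num at hpdvd ⊢; exact hpdvd)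
    exact (Nat.prime_dvd_prime_iff_eq hp (by norm_num)).mp this
  subst hp3
  exact hc b

theorem no_element_of_order_27 (M : SL3) : orderOf M ≠ 27 := by
  intro h
  have h27 : M ^ 27 = 1 := by rw [← h]; exact pow_orderOf_eq_one M
  have h27' : (M : Matrix (Fin 3) (Fin 3) (ZMod 7)) ^ 27 = 1 := by
    have := congrArg Subtype.val h27
    simpa using this
  set A : Matrix (Fin 3) (Fin 3) (ZMod 7) := (M : Matrix (Fin 3) (Fin 3) (ZMod 7)) with hA
  set m : Polynomial (ZMod 7) := minpoly (ZMod 7) A with hm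
  have hAint : IsIntegral (ZMod 7) A := Matrix.isIntegral A
  have hmne : m ≠ 0 := minpoly.ne_zero hAint
  -- degree of m ≤ 3
  have hdeg : m.natDegree ≤ 3 := by
    have h1 : m ∣ A.charpoly := A.minpoly_dvd_charpoly
    have h2 : A.charpoly.natDegree = 3 := by
      rw [Matrix.charpoly_natDegree_eq_dim]; simp
    have h3 : A.charpoly ≠ 0 := A.charpoly_monic.ne_zero
    calc m.natDegree ≤ A.charpoly.natDegree := Polynomial.natDegree_le_of_dvd h1 h3
      _ = 3 := h2
  -- m divides X^27 - 1
  have hdvd27 : m ∣ (X ^ 27 - 1 : Polynomial (ZMod 7)) := by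
    apply minpoly.dvd
    simp [h27']
  -- factorization of X^27 - 1
  have h7 : ((7 : ℕ) : Polynomial (ZMod 7)) = 0 := by
    rw [← map_natCast (C : ZMod 7 →+* Polynomial (ZMod 7)) 7]
    norm_num
    decide
  have hfact : (X ^ 27 - 1 : Polynomial (ZMod 7)) =
      (X ^ 9 - 1) * ((X ^ 9 - C 2) * (X ^ 9 - C 4)) := by
    have h2 : (C 2 : Polynomial (ZMod 7)) = 2 := by rw [show (2 : ZMod 7) = 1 + 1 from rfl, map_add, _root_.map_one]; ring
    have h4 : (C 4 : Polynomial (ZMod 7)) = 4 := by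
      rw [show (4 : ZMod 7) = 2 + 2 from rfl, map_add, h2]; ring
    rw [h2, h4]
    linear_combination (X ^ 18 - 2 * X ^ 9 + 1 : Polynomial (ZMod 7)) * h7
  -- the degree-9 factors are irreducible
  have hirr2 : Irreducible (X ^ 9 - C (2 : ZMod 7)) := irr_aux 2 (by decide)
  have hirr4 : Irreducible (X ^ 9 - C (4 : ZMod 7)) := irr_aux 4 (by decide)
  -- m is coprime to the degree-9 factors
  have hcop : ∀ c : ZMod 7, Irreducible (X ^ 9 - C c) →
      IsCoprime m (X ^ 9 - C c) := by
    intro c hirr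
    rw [isCoprime_comm, hirr.coprime_iff_not_dvd]
    intro hdvd
    have := Polynomial.natDegree_le_of_dvd hdvd hmne
    rw [Polynomial.natDegree_X_pow_sub_C] at this
    omega
  -- hence m divides X^9 - 1
  have hdvd9 : m ∣ (X ^ 9 - 1 : Polynomial (ZMod 7)) := by
    rw [hfact] at hdvd27
    exact (((hcop 2 hirr2).mul_right (hcop 4 hirr4))).dvd_of_dvd_mul_right hdvd27
  -- so A^9 = 1
  have hA9 : A ^ 9 = 1 := by
    obtain ⟨c, hc⟩ := hdvd9
    have : aeval A (X ^ 9 - 1 : Polynomial (ZMod 7)) = 0 := by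
      rw [hc, _root_.map_mul, minpoly.aeval, zero_mul]
    simpa [sub_eq_zero] using this
  have hM9 : M ^ 9 = 1 := by
    ext i j
    have := congrFun (congrFun hA9 i) j
    simpa using this
  have hdvd : (27 : ℕ) ∣ 9 := h ▸ orderOf_dvd_of_pow_eq_one hM9
  norm_num at hdvd
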